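/- Fix L : ℕ, finite types C, C' and finite dimension types d, d'. Let Ω ⊆ C, let ρ : K × K × C → Matrix d d ℂ be a family with every ρ(k_A, k_B, c) positive semidefinite, and let N : (K × K × C → Matrix d d ℂ) →ₗ[ℂ] (K × K × (C × C') → Matrix d' d' ℂ) be a linear map satisfying: (a) N maps families with all entries positive semidefinite to families with all entries positive semidefinite; (b) N preserves total trace; (c) N ∘ R = R ∘ N, where R is the ideal map acting per value of the classical index; (d) N is transcript-local: for each c : C there is a linear map N_c : (K × K → Matrix d d ℂ) →ₗ[ℂ] (K × K × C' → Matrix d' d' ℂ) with (N σ)(k'_A, k'_B, (c, c')) = N_c (fun (k_A, k_B) => σ(k_A, k_B, c)) (k'_A, k'_B, c') for all σ; and (e) N is abort-forcing off Ω: for every σ with all entries positive semidefinite, every c ∉ Ω, every c' and every (k'_A, k'_B) ≠ (⊥, ⊥), (N σ)(k'_A, k'_B, (c, c')) = 0. Then ∑ over (k'_A, k'_B, c, c') of ‖(N ρ)(k'_A, k'_B, (c, c')) − (R (N ρ))(k'_A, k'_B, (c, c'))‖₁ ≤ ∑ over (k_A, k_B) and c ∈ Ω of ‖ρ(k_A,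 k_B, c) − (R ρ)(k_A, k_B, c)‖₁, and this in turn is at most ∑ over all (k_A, k_B, c) of ‖ρ(k_A, k_B, c) − (R ρ)(k_A, k_B, c)‖₁. -/

import Mathlib

open scoped ComplexOrder

/-- The key alphabet: keys of length `l ≤ L`, i.e. pairs of a length `l : Fin (L+1)`
and a bitstring of that length. -/
abbrev Key (L : ℕ) := Σ l : Fin (L+1), (Fin (l : ℕ) → Bool)

/-- The length of a key. -/
def lenKey {L : ℕ} (k : Key L) : Fin (L+1) := k.1

/-- The unique key of length `0` (the abort symbol `⊥`). -/
def botKey (L : ℕ) : Key L := ⟨0, fun _ => false⟩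

/-- The ideal-key weight `w(k_A, k_B)`: `2^(-len k_A)` if the lengths agree and
`k_A = k_B`, `0` if the lengths agree but `k_A ≠ k_B`, and
`2^(-(len k_A + len k_B))` if the lengths differ. -/
noncomputable def idealWt {L : ℕ} (kA kB : Key L) : ℝ :=
  if lenKey kA = lenKey kB then
    (if kA = kB then (2:ℝ) ^ (-((lenKey kA : ℕ) : ℤ)) else 0)
  else (2:ℝ) ^ (-(((lenKey kA : ℕ) : ℤ) + ((lenKey kB : ℕ) : ℤ)))

/-- The ideal map `R`, acting per value of the additional classical index `c`:
it replaces the key registers by ideal keys, weighting by `idealWt` and summing the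
input state over all key pairs with the same pair of lengths. -/
noncomputable def idealMap {L : ℕ} {C d : Type*}
    (ρ : Key L × Key L × C → Matrix d d ℂ) : Key L × Key L × C → Matrix d d ℂ :=
  fun p => idealWt p.1 p.2.1 •
    ∑ q : Key L × Key L,
      if lenKey q.1 = lenKey p.1 ∧ lenKey q.2 = lenKey p.2.1
        then ρ (q.1, q.2, p.2.2) else 0

/-- The trace norm `‖A‖₁` of a complex matrix `A`: the trace of the positive
semidefinite square root of `Aᴴ * A`. -/
noncomputable def traceNorm {n : Type*} [Fintype n] [DecidableEq n] (A : Matrix n n ℂ) : ℝ :=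
  ((Matrix.posSemidef_conjTranspose_mul_self A).1.eigenvectorUnitary.1 *
    Matrix.diagonal ((fun x : ℝ => (x : ℂ)) ∘ Real.sqrt ∘ (Matrix.posSemidef_conjTranspose_mul_self A).1.eigenvalues) *
    (star (Matrix.posSemidef_conjTranspose_mul_self A).1.eigenvectorUnitary : Matrix n n ℂ)).trace.re

/-!
By transcript-locality and the abort condition, `N` maps the part of `ρ` with transcript outside
`Ω` to a family supported on the key pair `(⊥, ⊥)`, which the ideal map fixes; as `N` commutes
with the ideal map, that part drops out of the real–ideal difference. What is left is `N`
applied to the Hermitian family `(ρ - R ρ)` restricted to `Ω`, and a positive trace-preserving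
map does not increase the summed trace norm of a Hermitian family: writing it as `P - Q` with
`P, Q ≥ 0`, we get `‖N P - N Q‖₁ ≤ tr (N P) + tr (N Q) = tr P + tr Q`.
-/

section TraceNorm

open scoped MatrixOrder
open Matrix

variable {n : Type*} [Fintype n] [DecidableEq n]

lemma traceNorm_eq_re_trace_abs (A : Matrix n n ℂ) : traceNorm A = (CFC.abs A).trace.re := by
  rw [CFC.abs, star_eq_conjTranspose,
    CFC.sqrt_eq_real_sqrt _ (posSemidef_conjTranspose_mul_self A).nonneg,
    cfcₙ_eq_cfc (hf := Real.continuous_sqrt.continuousOn) (hf0 := Real.sqrt_zero),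
    (posSemidef_conjTranspose_mul_self A).1.cfc_eq]
  rfl

lemma traceNorm_nonneg (A : Matrix n n ℂ) : 0 ≤ traceNorm A := by
  rw [traceNorm_eq_re_trace_abs]
  exact (Complex.nonneg_iff.mp (CFC.abs_nonneg A).posSemidef.trace_nonneg).1

@[simp]
lemma traceNorm_zero : traceNorm (0 : Matrix n n ℂ) = 0 := by
  simp [traceNorm_eq_re_trace_abs]

lemma Matrix.IsHermitian.traceNorm_eq_sum_abs_eigenvalues {A : Matrix n n ℂ}
    (hA : A.IsHermitian) :
    traceNorm A = ∑ i, |hA.eigenvalues i| := by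
  rw [traceNorm_eq_re_trace_abs, CFC.abs_eq_cfc_norm A hA, hA.cfc_eq, IsHermitian.cfc,
    Unitary.conjStarAlgAut_apply, trace_mul_cycle, Unitary.coe_star_mul_self, one_mul,
    trace_diagonal]
  simp

lemma Matrix.IsHermitian.eigenvalues_eq_conj_apply {A : Matrix n n ℂ} (hA : A.IsHermitian)
    (i : n) :
    (hA.eigenvalues i : ℂ) =
      (star (hA.eigenvectorUnitary : Matrix n n ℂ) * A * hA.eigenvectorUnitary) i i := by
  have := hA.conjStarAlgAut_star_eigenvectorUnitary
  rw [Unitary.conjStarAlgAut_apply, Unitary.coe_star, star_star] at this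
  simp [this]

lemma Matrix.PosSemidef.traceNorm_sub_le {P Q : Matrix n n ℂ} (hP : P.PosSemidef)
    (hQ : Q.PosSemidef) :
    traceNorm (P - Q) ≤ P.trace.re + Q.trace.re := by
  have hA := hP.isHermitian.sub hQ.isHermitian
  set U : Matrix n n ℂ := (hA.eigenvectorUnitary : Matrix n n ℂ)
  have hconj {M : Matrix n n ℂ} (hM : M.PosSemidef) :
      (star U * M * U).PosSemidef ∧ (star U * M * U).trace = M.trace := by
    refine ⟨by simpa [star_eq_conjTranspose] using hM.conjTranspose_mul_mul_same U, ?_⟩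
    rw [trace_mul_cycle, show U * star U = 1 by simp [U], one_mul]
  obtain ⟨hBP, htrP⟩ := hconj hP
  obtain ⟨hBQ, htrQ⟩ := hconj hQ
  -- In the eigenbasis of `P - Q`, each eigenvalue is a difference of the (nonnegative) diagonal
  -- entries of `P` and `Q`.
  have habs (i : n) :
      |hA.eigenvalues i| ≤ ((star U * P * U) i i).re + ((star U * Q * U) i i).re := by
    have := congrArg Complex.re (hA.eigenvalues_eq_conj_apply i)
    rw [Complex.ofReal_re, Matrix.mul_sub, Matrix.sub_mul, sub_apply, Complex.sub_re] at this
    have h1 := (Complex.nonneg_iff.mp (hBP.diag_nonneg (i := i))).1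
    have h2 := (Complex.nonneg_iff.mp (hBQ.diag_nonneg (i := i))).1
    rw [this, abs_le]
    constructor <;> linarith
  rw [hA.traceNorm_eq_sum_abs_eigenvalues, ← htrP, ← htrQ, trace, trace, Complex.re_sum,
    Complex.re_sum, ← Finset.sum_add_distrib]
  exact Finset.sum_le_sum fun i _ => habs i

lemma Matrix.IsHermitian.exists_posSemidef_sub_eq {A : Matrix n n ℂ} (hA : A.IsHermitian) :
    ∃ P Q : Matrix n n ℂ, P.PosSemidef ∧ Q.PosSemidef ∧ A = P - Q ∧
      traceNorm A = P.trace.re + Q.trace.re :=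
  ⟨A⁺, A⁻, (CFC.posPart_nonneg A).posSemidef, (CFC.negPart_nonneg A).posSemidef,
    (CFC.posPart_sub_negPart A hA).symm, by
      rw [traceNorm_eq_re_trace_abs, ← CFC.posPart_add_negPart A hA, trace_add, Complex.add_re]⟩

end TraceNorm

theorem sum_traceNorm_map_le {ι ι' n n' : Type*} [Fintype ι] [Fintype ι']
    [Fintype n] [DecidableEq n] [Fintype n'] [DecidableEq n']
    (N : (ι → Matrix n n ℂ) →ₗ[ℂ] (ι' → Matrix n' n' ℂ))
    (hpos : ∀ σ : ι → Matrix n n ℂ, (∀ i, (σ i).PosSemidef) →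
      ∀ j, (N σ j).PosSemidef)
    (htr : ∀ σ : ι → Matrix n n ℂ, ∑ j, (N σ j).trace = ∑ i, (σ i).trace)
    {σ : ι → Matrix n n ℂ} (hσ : ∀ i, (σ i).IsHermitian) :
    ∑ j, traceNorm (N σ j) ≤ ∑ i, traceNorm (σ i) := by
  choose P Q hP hQ hσPQ hnorm using fun i => (hσ i).exists_posSemidef_sub_eq
  have hNσ : N σ = N P - N Q := by rw [← map_sub]; exact congrArg N (funext hσPQ)
  calc ∑ j, traceNorm (N σ j) = ∑ j, traceNorm (N P j - N Q j) := by simp [hNσ]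
    _ ≤ ∑ j, ((N P j).trace.re + (N Q j).trace.re) :=
      Finset.sum_le_sum fun j _ => (hpos P hP j).traceNorm_sub_le (hpos Q hQ j)
    _ = ∑ i, ((P i).trace.re + (Q i).trace.re) := by
      simp only [Finset.sum_add_distrib, ← Complex.re_sum, htr]
    _ = ∑ i, traceNorm (σ i) := by simp only [hnorm]

lemma sum_indicator_eq_sum_sum_filter {α β γ M : Type*} [Fintype α] [Fintype β] [Fintype γ]
    [AddCommMonoid M] (S : Set γ) [DecidablePred (· ∈ S)] (f : α × β × γ → M) :
    ∑ p, {p : α × β × γ | p.2.2 ∈ S}.indicator f p =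
      ∑ q : α × β, ∑ c ∈ Finset.univ.filter (· ∈ S), f (q.1, q.2, c) := by
  simp only [Finset.sum_filter, Fintype.sum_prod_type, Set.indicator_apply, Set.mem_ofPred_eq]

section IdealMap

variable {L : ℕ} {C d : Type*}

lemma lenKey_eq_zero_iff {k : Key L} : lenKey k = 0 ↔ k = botKey L := by
  refine ⟨fun h => ?_, fun h => h ▸ rfl⟩
  obtain ⟨l, s⟩ := k
  obtain rfl : l = 0 := h
  rw [botKey, Sigma.mk.injEq]
  exact ⟨rfl, heq_of_eq (funext fun i => i.elim0)⟩

lemma idealWt_botKey_botKey : idealWt (botKey L) (botKey L) = 1 := by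
  simp [idealWt, lenKey, botKey]

lemma idealMap_isHermitian [Fintype d] {ρ : Key L × Key L × C → Matrix d d ℂ}
    (hρ : ∀ p, (ρ p).IsHermitian) (p : Key L × Key L × C) : (idealMap ρ p).IsHermitian := by
  refine Matrix.IsHermitian.smul (isSelfAdjoint_sum _ fun q _ => ?_).isHermitian
    (IsSelfAdjoint.all _)
  split_ifs
  exacts [(hρ _).isSelfAdjoint, .zero _]

lemma idealMap_indicator (S : Set C) (ρ : Key L × Key L × C → Matrix d d ℂ) :
    idealMap ({p | p.2.2 ∈ S}.indicator ρ) = {p | p.2.2 ∈ S}.indicator (idealMap ρ) := by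
  funext p
  by_cases hp : p.2.2 ∈ S <;> simp [idealMap, hp]

lemma idealMap_eq_self_of_eq_zero_of_ne_botKey {X : Key L × Key L × C → Matrix d d ℂ}
    (hX : ∀ kA kB c, (kA, kB) ≠ (botKey L, botKey L) → X (kA, kB, c) = 0) :
    idealMap X = X := by
  funext ⟨kA, kB, c⟩
  by_cases hk : (kA, kB) = (botKey L, botKey L)
  · obtain ⟨rfl, rfl⟩ := Prod.mk.inj hk
    rw [idealMap, idealWt_botKey_botKey, one_smul, Finset.sum_eq_single (botKey L, botKey L)]
    · exact if_pos ⟨rfl, rfl⟩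
    · intro q _ hq
      rw [if_neg]
      rintro ⟨h1, h2⟩
      exact hq (Prod.ext (lenKey_eq_zero_iff.mp h1) (lenKey_eq_zero_iff.mp h2))
    · simp
  · rw [hX kA kB c hk, idealMap, Finset.sum_eq_zero, smul_zero]
    rintro ⟨kA', kB'⟩ -
    split_ifs with hlen
    · refine hX kA' kB' c fun hq => hk ?_
      obtain ⟨rfl, rfl⟩ := Prod.mk.inj hq
      exact Prod.ext (lenKey_eq_zero_iff.mp hlen.1.symm) (lenKey_eq_zero_iff.mp hlen.2.symm)
    · rfl

lemma sub_idealMap_eq_apply_indicator {E d' : Type*}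
    (N : (Key L × Key L × C → Matrix d d ℂ) →ₗ[ℂ]
      (Key L × Key L × E → Matrix d' d' ℂ))
    (hcomm : ∀ σ, N (idealMap σ) = idealMap (N σ)) (S : Set C)
    (ρ : Key L × Key L × C → Matrix d d ℂ)
    (hS : ∀ kA kB e, (kA, kB) ≠ (botKey L, botKey L) →
      N ({p | p.2.2 ∈ S}ᶜ.indicator ρ) (kA, kB, e) = 0) :
    N ρ - idealMap (N ρ) = N ({p | p.2.2 ∈ S}.indicator (ρ - idealMap ρ)) := by
  set T := {p : Key L × Key L × C | p.2.2 ∈ S}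
  have hcompl : idealMap (Tᶜ.indicator ρ) = Tᶜ.indicator (idealMap ρ) :=
    idealMap_indicator Sᶜ ρ
  calc N ρ - idealMap (N ρ)
      = N (T.indicator (ρ - idealMap ρ)) + N (Tᶜ.indicator (ρ - idealMap ρ)) := by
        rw [← map_add, T.indicator_self_add_compl, map_sub, hcomm]
    _ = N (T.indicator (ρ - idealMap ρ)) := by
      rw [Set.indicator_sub' Tᶜ, ← hcompl, map_sub, hcomm,
        idealMap_eq_self_of_eq_zero_of_ne_botKey hS, sub_self, add_zero]

end IdealMap

/-- State-level form of the reduction corollary: for an authentication post-processing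
channel `N` that is positive and total-trace-preserving, commutes with the ideal map,
is transcript-local, and forces both parties to abort whenever the transcript lies
outside the honest-authentication event `Ω`, the final real–ideal trace distance is
bounded by the pre-processing real–ideal trace distance restricted to `Ω`, which in
turn is at most the full pre-processing real–ideal trace distance. -/
theorem app_channel_traceDist_le (L : ℕ) (C C' d d' : Type*)
    [Fintype C] [Fintype C'] [Fintype d] [DecidableEq d] [Fintype d'] [DecidableEq d']
    (Ω : Set C) [DecidablePred (· ∈ Ω)]
    (ρ : Key L × Key L × C → Matrix d d ℂ)
    (hρ : ∀ p, (ρ p).PosSemidef)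
    (N : (Key L × Key L × C → Matrix d d ℂ) →ₗ[ℂ]
          (Key L × Key L × (C × C') → Matrix d' d' ℂ))
    (hpos : ∀ σ : Key L × Key L × C → Matrix d d ℂ,
        (∀ p, (σ p).PosSemidef) → ∀ p, ((N σ) p).PosSemidef)
    (htr : ∀ σ : Key L × Key L × C → Matrix d d ℂ,
        ∑ p : Key L × Key L × (C × C'), ((N σ) p).trace =
          ∑ p : Key L × Key L × C, (σ p).trace)
    (hcomm : ∀ σ : Key L × Key L × C → Matrix d d ℂ,
        N (idealMap σ) = idealMap (N σ))
    (hlocal : ∀ c : C, ∃ Nc : (Key L × Key L → Matrix d d ℂ) →ₗ[ℂ]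
          (Key L × Key L × C' → Matrix d' d' ℂ),
        ∀ (σ : Key L × Key L × C → Matrix d d ℂ) (kA' kB' : Key L) (c' : C'),
          (N σ) (kA', kB', (c, c')) = Nc (fun q => σ (q.1, q.2, c)) (kA', kB', c'))
    (habort : ∀ σ : Key L × Key L × C → Matrix d d ℂ,
        (∀ p, (σ p).PosSemidef) → ∀ c : C, c ∉ Ω → ∀ (c' : C') (kA' kB' : Key L),
          (kA', kB') ≠ (botKey L, botKey L) → (N σ) (kA', kB', (c, c')) = 0) :
    (∑ p : Key L × Key L × (C × C'), traceNorm ((N ρ) p - idealMap (N ρ) p) ≤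
      ∑ q : Key L × Key L, ∑ c ∈ Finset.univ.filter (· ∈ Ω),
        traceNorm (ρ (q.1, q.2, c) - idealMap ρ (q.1, q.2, c))) ∧
    (∑ q : Key L × Key L, ∑ c ∈ Finset.univ.filter (· ∈ Ω),
        traceNorm (ρ (q.1, q.2, c) - idealMap ρ (q.1, q.2, c)) ≤
      ∑ p : Key L × Key L × C, traceNorm (ρ p - idealMap ρ p)) := by
  set T := {p : Key L × Key L × C | p.2.2 ∈ Ω}
  have hout_psd (p : Key L × Key L × C) : (Tᶜ.indicator ρ p).PosSemidef := by
    by_cases hp : p ∈ T <;> simp [hp, hρ p, Matrix.PosSemidef.zero]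
  have hfinal := sub_idealMap_eq_apply_indicator N hcomm Ω ρ <| by
    rintro kA kB ⟨c, c'⟩ hk
    by_cases hc : c ∈ Ω
    · obtain ⟨Nc, hNc⟩ := hlocal c
      have hslice : (fun q : Key L × Key L => Tᶜ.indicator ρ (q.1, q.2, c)) = 0 := by
        funext q
        simp [T, hc]
      rw [hNc, hslice, map_zero, Pi.zero_apply]
    · exact habort _ hout_psd c hc c' kA kB hk
  have hherm (p : Key L × Key L × C) : (T.indicator (ρ - idealMap ρ) p).IsHermitian := by
    by_cases hp : p ∈ T <;>
      simp [hp, (hρ p).isHermitian.sub (idealMap_isHermitian (fun q => (hρ q).isHermitian) p)]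
  have hsum := sum_indicator_eq_sum_sum_filter Ω fun p => traceNorm (ρ p - idealMap ρ p)
  beta_reduce at hsum
  rw [← hsum]
  refine ⟨?_, Finset.sum_le_sum fun p _ =>
    Set.indicator_le_self' (fun p _ => traceNorm_nonneg _) p⟩
  calc ∑ p, traceNorm (N ρ p - idealMap (N ρ) p)
      = ∑ p, traceNorm (N (T.indicator (ρ - idealMap ρ)) p) := by rw [← hfinal]; rfl
    _ ≤ ∑ p, traceNorm (T.indicator (ρ - idealMap ρ) p) :=
      sum_traceNorm_map_le N hpos htr hherm
    _ = ∑ p, T.indicator (fun p => traceNorm (ρ p - idealMap ρ p)) p :=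
      Finset.sum_congr rfl fun p _ => congrFun (Set.indicator_comp_of_zero traceNorm_zero).symm p
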